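/- arXiv:2201.06008 — 7 statements merged into one kernel-verified Lean document; each statement's English description precedes it below -/
import Mathlib

section
/- Let θ^{(n)}_{n-j} and p^{(n)}_{n-j} be respectively the DOC and DCC kernels associated with an invertible lower-triangular convolution family b^{(j)}_{j-k} (with b^{(j)}_0 ≠ 0), and set p^{(n)}_{-1} := 0. Then for all 1 ≤ j ≤ n ≤ N: p^{(n)}_{n-j} = ∑_{l=j}^n θ^{(l)}_{l-j} and θ^{(n)}_{n-j} = p^{(n)}_{n-j} − p^{(n-1)}_{n-1-j}. -/
open Finset

lemma swap_sum_aux (j n : ℕ) (f : ℕ → ℕ → ℝ) :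
    ∑ i ∈ Icc j n, ∑ l ∈ Icc i n, f i l = ∑ l ∈ Icc j n, ∑ i ∈ Icc j l, f i l := by
  apply Finset.sum_comm'
  intro x y
  simp only [mem_Icc]
  omega

lemma icc_split_bot (j n : ℕ) (h : j ≤ n) (g : ℕ → ℝ) :
    ∑ i ∈ Icc j n, g i = g j + ∑ i ∈ Icc (j+1) n, g i := by
  rw [Finset.Icc_add_one_left_eq_Ioc, ← Finset.sum_insert (by simp)]
  congr 1
  rw [Finset.Icc_eq_cons_Ioc h, Finset.cons_eq_insert]

/-- Relations between DOC kernels `θ n j = θ^{(n)}_{n-j}` and DCC kernels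
`p n j = p^{(n)}_{n-j}`, with the convention `p^{(m)}_{-1} = 0`,
i.e. `p m (m+1) = 0`. -/
theorem doc_dcc_relations (N : ℕ) (b θ p : ℕ → ℕ → ℝ)
    (hb0 : ∀ j, 1 ≤ j → j ≤ N → b j j ≠ 0)
    (hdoc : ∀ k n, 1 ≤ k → k ≤ n → n ≤ N →
      ∑ j ∈ Icc k n, θ n j * b j k = if n = k then 1 else 0)
    (hdcc : ∀ k n, 1 ≤ k → k ≤ n → n ≤ N →
      ∑ j ∈ Icc k n, p n j * b j k = 1)
    (hconv : ∀ m, p m (m + 1) = 0) :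
    ∀ j n, 1 ≤ j → j ≤ n → n ≤ N →
      p n j = ∑ l ∈ Icc j n, θ l j ∧ θ n j = p n j - p (n - 1) j := by
  -- the candidate DCC kernel built from θ satisfies the DCC relation
  have hqdcc : ∀ j n, 1 ≤ j → j ≤ n → n ≤ N →
      ∑ i ∈ Icc j n, (∑ l ∈ Icc i n, θ l i) * b i j = 1 := by
    intro j n hj1 hjn hn
    have : ∑ i ∈ Icc j n, (∑ l ∈ Icc i n, θ l i) * b i j
        = ∑ i ∈ Icc j n, ∑ l ∈ Icc i n, θ l i * b i j := by
      apply Finset.sum_congr rfl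
      intro i _
      rw [Finset.sum_mul]
    rw [this, swap_sum_aux j n (fun i l => θ l i * b i j)]
    have : ∀ l ∈ Icc j n, ∑ i ∈ Icc j l, θ l i * b i j = if l = j then 1 else 0 := by
      intro l hl
      simp only [mem_Icc] at hl
      exact hdoc j l hj1 hl.1 (le_trans hl.2 hn)
    rw [Finset.sum_congr rfl this, Finset.sum_ite_eq' (Icc j n) j (fun _ => (1:ℝ))]
    simp [hjn]
  -- first relation by downward induction
  have key : ∀ n, n ≤ N → ∀ j, 1 ≤ j → j ≤ n → p n j = ∑ l ∈ Icc j n, θ l j := by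
    intro n hn
    have main : ∀ d j, n - j = d → 1 ≤ j → j ≤ n → p n j = ∑ l ∈ Icc j n, θ l j := by
      intro d
      induction d using Nat.strong_induction_on with
      | _ d IH =>
        intro j hd hj1 hjn
        have h1 := hdcc j n hj1 hjn hn
        have h2 := hqdcc j n hj1 hjn hn
        rw [icc_split_bot j n hjn] at h1 h2
        have htail : ∑ i ∈ Icc (j+1) n, p n i * b i j
            = ∑ i ∈ Icc (j+1) n, (∑ l ∈ Icc i n, θ l i) * b i j := by
          apply Finset.sum_congr rfl
          intro i hi
          simp only [mem_Icc] at hi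
          rw [IH (n - i) (by omega) i rfl (by omega) hi.2]
        have hbne := hb0 j hj1 (le_trans hjn hn)
        have : p n j * b j j = (∑ l ∈ Icc j n, θ l j) * b j j := by
          have := h1.trans h2.symm
          rw [htail] at this
          linarith
        exact mul_right_cancel₀ hbne this
    intro j hj1 hjn
    exact main (n - j) j rfl hj1 hjn
  intro j n hj1 hjn hn
  refine ⟨key n hn j hj1 hjn, ?_⟩
  rcases eq_or_lt_of_le hjn with heq | hlt
  · subst heq
    have h0 : p (j - 1) j = 0 := by
      have := hconv (j - 1)
      rwa [show j - 1 + 1 = j by omega] at this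
    rw [h0, key j hn j hj1 le_rfl, Finset.Icc_self, Finset.sum_singleton]
    ring
  · have h1 := key n hn j hj1 hjn
    have h2 := key (n - 1) (by omega) j hj1 (by omega)
    have hsum : ∑ l ∈ Icc j n, θ l j = ∑ l ∈ Icc j (n - 1), θ l j + θ n j := by
      have := Finset.sum_Icc_succ_top (f := fun l => θ l j) (a := j) (b := n - 1) (by omega)
      rw [show n - 1 + 1 = n by omega] at this
      exact this
    rw [h1, h2, hsum]
    ring
end

section
/- Let N ≥ 1 and for 2 ≤ n ≤ N let r_n > 0, τ_n > 0 satisfy τ_n = r_n τ_{n-1} with τ_1 > 0. Define the variable-step BDF2 kernels b^{(n)}_0 = (1+2r_n)/(τ_n(1+r_n)), b^{(n)}_1 = −r_n²/(τ_n(1+r_n)), b^{(n)}_j = 0 for 2 ≤ j ≤ n−1 (with convention r_1 = 0, so b^{(1)}_0 = 1/τ_1). If 0 < r_k ≤ r_max − δ for all 2 ≤ k ≤ N, where δ ∈ (0, r_max) and r_max is the root of x³ = (1+2x)², then for any real sequence (w_k)_{k=1}^n: 2 ∑_{k=1}^n w_k ∑_{j=1}^k b^{(k)}_{k-j} w_j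 ≥ (δ/20) ∑_{k=1}^n w_k²/τ_k ≥ 0. -/
lemma keyA2 (u : ℝ) (h0 : 0 ≤ u) (h2 : u ≤ 2) :
    2 ≤ (2 + 4*u^2 - u^3) / (1 + u^2) := by
  rw [le_div_iff₀ (by positivity)]
  nlinarith [mul_nonneg (mul_nonneg h0 h0) (sub_nonneg.2 h2)]

lemma Bmono (s v : ℝ) (h0 : 0 ≤ s) (h : s ≤ v) :
    s^3/(1+s^2) ≤ v^3/(1+v^2) := by
  rw [div_le_div_iff₀ (by positivity) (by positivity)]
  nlinarith [pow_le_pow_left₀ h0 h 3, mul_nonneg (sub_nonneg.2 h) (sq_nonneg (s*v))]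

lemma keylem (m v u : ℝ) (hm2 : 2 < m) (hm5 : m^2 < 5)
    (hm3 : m^3 = 1 + 2*m^2) (hu0 : 0 ≤ u) (huv : u ≤ v) (hvm : v < m) :
    (m^2 - v^2)/20 + v^3/(1 + v^2) ≤ (2 + 4*u^2 - u^3)/(1 + u^2) := by
  have hv0 : 0 ≤ v := le_trans hu0 huv
  have hv5 : v^2 < 5 := by nlinarith
  rcases le_or_gt u 2 with h | h
  · refine le_trans ?_ (keyA2 u hu0 h)
    rw [div_add_div _ _ (by norm_num) (by positivity), div_le_iff₀ (by positivity)]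
    nlinarith [mul_nonneg (sub_nonneg.2 hvm.le) (sq_nonneg (v-2)),
      mul_nonneg (sub_nonneg.2 hvm.le) (sq_nonneg v),
      mul_nonneg (sub_nonneg.2 hvm.le) (sq_nonneg (v-1)),
      mul_nonneg hv0 (sq_nonneg (v-2)), sq_nonneg (v-2), sq_nonneg (m-2),
      mul_nonneg (sub_nonneg.2 hvm.le) (sq_nonneg (m-v)),
      mul_nonneg (mul_nonneg hv0 hv0) (sub_nonneg.2 hvm.le)]
  · have hv2 : 2 < v := lt_of_lt_of_le h huv
    have hAmono : (2 + 4*v^2 - v^3)/(1+v^2) ≤ (2 + 4*u^2 - u^3)/(1+u^2) := by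
      rw [div_le_div_iff₀ (by positivity) (by positivity)]
      nlinarith [mul_nonneg (sub_nonneg.2 huv) (sq_nonneg (u*v)),
        mul_nonneg (sub_nonneg.2 huv) (mul_nonneg (by linarith : (0:ℝ) ≤ u) (by linarith : (0:ℝ) ≤ v)),
        mul_nonneg (sub_nonneg.2 huv) (sq_nonneg (u+v)),
        mul_nonneg (sub_nonneg.2 huv) (sq_nonneg (u-v))]
    refine le_trans ?_ hAmono
    have heq2 : (2 + 4*v^2 - v^3)/(1+v^2) - v^3/(1+v^2) = (2 + 4*v^2 - 2*v^3)/(1+v^2) := by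
      field_simp; ring
    have hmv : (0:ℝ) ≤ m - v := by linarith
    have hinner : 0 ≤ 40*(m^2+m*v+v^2-2*m-2*v) - (m+v)*(1+v^2) := by nlinarith
    have hmain : (m^2 - v^2)/20 ≤ (2 + 4*v^2 - 2*v^3)/(1+v^2) := by
      rw [div_le_div_iff₀ (by norm_num) (by positivity)]
      nlinarith [mul_nonneg hmv hinner]
    linarith [hmain, heq2]

lemma step_ineq (u τ' w w' : ℝ) (hu : 0 < u) (hτ' : 0 < τ') :
    (2 + 4*u^2 - u^3)/(1+u^2) * (w^2/(u^2*τ')) - u^3/(1+u^2) * (w'^2/τ')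
    ≤ 2 * (w * ((1 + 2*u^2)/((u^2*τ')*(1+u^2)) * w - (u^2)^2/((u^2*τ')*(1+u^2)) * w')) := by
  have hpos : (0:ℝ) < u^3*(w - u*w')^2 / ((u^2*τ')*(1+u^2)) ∨ True := Or.inr trivial
  have hnn : (0:ℝ) ≤ u^3*(w - u*w')^2 / ((u^2*τ')*(1+u^2)) := by positivity
  have heq : 2 * (w * ((1 + 2*u^2)/((u^2*τ')*(1+u^2)) * w - (u^2)^2/((u^2*τ')*(1+u^2)) * w'))
      - ((2 + 4*u^2 - u^3)/(1+u^2) * (w^2/(u^2*τ')) - u^3/(1+u^2) * (w'^2/τ'))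
      = u^3*(w - u*w')^2 / ((u^2*τ')*(1+u^2)) := by
    field_simp
    ring
  linarith
open Finset

/-- Positive definiteness of the variable-step BDF2 kernels: with the ratio
condition `0 < r_k ≤ r_max − δ`, where `r_max` is the root of
`x³ = (1+2x)²` lying in `(4,5)`, the quadratic form generated by the BDF2
kernels is bounded below by `(δ/20) ∑ w_k²/τ_k ≥ 0`. The inner sum
`∑_{j=1}^k b^{(k)}_{k-j} w_j` is written out explicitly since
`b^{(k)}_j = 0` for `j ≥ 2`. -/
theorem bdf2_kernel_positive_definite (N : ℕ) (hN : 1 ≤ N)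
    (τ r : ℕ → ℝ) (hτ1 : 0 < τ 1) (hr1 : r 1 = 0)
    (hstep : ∀ n, 2 ≤ n → n ≤ N → τ n = r n * τ (n - 1))
    (rmax δ : ℝ) (hroot : rmax ^ 3 = (1 + 2 * rmax) ^ 2)
    (hrmax : rmax ∈ Set.Ioo (4:ℝ) 5)
    (hδ : 0 < δ) (hδr : δ < rmax)
    (hratio : ∀ k, 2 ≤ k → k ≤ N → 0 < r k ∧ r k ≤ rmax - δ)
    (w : ℕ → ℝ) :
    ∀ n, 1 ≤ n → n ≤ N →
      2 * ∑ k ∈ Icc 1 n, w k *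
          ((1 + 2 * r k) / (τ k * (1 + r k)) * w k
            - r k ^ 2 / (τ k * (1 + r k)) * w (k - 1))
        ≥ δ / 20 * ∑ k ∈ Icc 1 n, w k ^ 2 / τ k
      ∧ δ / 20 * ∑ k ∈ Icc 1 n, w k ^ 2 / τ k ≥ 0 := by
  obtain ⟨hr4, hr5⟩ := hrmax
  have hrmax0 : (0:ℝ) < rmax := by linarith
  have hρ : (0:ℝ) < rmax - δ := by linarith
  set m : ℝ := Real.sqrt rmax with hm
  set v : ℝ := Real.sqrt (rmax - δ) with hv
  have hm0 : 0 ≤ m := Real.sqrt_nonneg _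
  have hv0 : 0 ≤ v := Real.sqrt_nonneg _
  have hm2sq : m^2 = rmax := Real.sq_sqrt hrmax0.le
  have hv2sq : v^2 = rmax - δ := Real.sq_sqrt hρ.le
  have hm2 : 2 < m := by nlinarith
  have hm5 : m^2 < 5 := by rw [hm2sq]; exact hr5
  have hm3 : m^3 = 1 + 2*m^2 := by
    have h1 : (m^3)^2 = (1 + 2*m^2)^2 := by
      rw [show (m^3)^2 = (m^2)^3 by ring, hm2sq, hroot]
    have h4 : (0:ℝ) < m^3 + (1+2*m^2) := by positivity
    have hf : (m^3 - (1+2*m^2))*(m^3+(1+2*m^2)) = 0 := by linear_combination h1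
    have h5 := (mul_eq_zero.1 hf).resolve_right (ne_of_gt h4)
    linarith
  have hvm : v < m := by
    rw [hm, hv]; exact Real.sqrt_lt_sqrt hρ.le (by linarith)
  have hδeq : δ = m^2 - v^2 := by rw [hm2sq, hv2sq]; ring
  set Bv : ℝ := v^3/(1+v^2) with hBv
  have hBv0 : 0 ≤ Bv := by positivity
  -- τ positivity
  have hτpos : ∀ k, 1 ≤ k → k ≤ N → 0 < τ k := by
    intro k hk
    induction k, hk using Nat.le_induction with
    | base => intro _; exact hτ1
    | succ n hn ih =>
      intro hle
      have h2n : 2 ≤ n + 1 := by omega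
      have hrn := hratio (n+1) h2n hle
      have := hstep (n+1) h2n hle
      simp only [Nat.add_sub_cancel] at this
      rw [this]
      exact mul_pos hrn.1 (ih (by omega))
  -- base-case key bound
  have hkey0 : δ/20 + Bv ≤ 2 := by
    have hk := keylem m v 0 hm2 hm5 hm3 le_rfl hv0 hvm
    norm_num at hk
    rw [hδeq, hBv]
    linarith
  -- invariant
  have inv : ∀ n, 1 ≤ n → n ≤ N →
      2 * ∑ k ∈ Icc 1 n, w k *
          ((1 + 2 * r k) / (τ k * (1 + r k)) * w k
            - r k ^ 2 / (τ k * (1 + r k)) * w (k - 1))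
        ≥ δ / 20 * ∑ k ∈ Icc 1 n, w k ^ 2 / τ k + Bv * (w n ^ 2 / τ n) := by
    intro n hn
    induction n, hn using Nat.le_induction with
    | base =>
      intro _
      rw [Icc_self, sum_singleton, sum_singleton]
      have hq : 0 ≤ w 1 ^ 2 / τ 1 := by positivity
      have he : w 1 * ((1 + 2 * r 1) / (τ 1 * (1 + r 1)) * w 1
          - r 1 ^ 2 / (τ 1 * (1 + r 1)) * w (1-1)) = w 1 ^2 / τ 1 := by
        rw [hr1]; field_simp; ring
      rw [he]
      nlinarith
    | succ n hn ih =>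
      intro hle
      have ihh := ih (by omega)
      have h2n : 2 ≤ n + 1 := by omega
      obtain ⟨hrp, hrb⟩ := hratio (n+1) h2n hle
      have hτn : 0 < τ n := hτpos n hn (by omega)
      have hτn1 : 0 < τ (n+1) := hτpos (n+1) (by omega) hle
      set u : ℝ := Real.sqrt (r (n+1)) with hu
      have hu0 : 0 < u := Real.sqrt_pos.2 hrp
      have hu2 : u^2 = r (n+1) := Real.sq_sqrt hrp.le
      have huv : u ≤ v := by
        rw [hu, hv]; exact Real.sqrt_le_sqrt (by linarith)
      have hτeq : τ (n+1) = u^2 * τ n := by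
        have := hstep (n+1) h2n hle
        simp only [Nat.add_sub_cancel] at this
        rw [this, hu2]
      -- split the sums
      rw [sum_Icc_succ_top (by omega : 1 ≤ n+1), sum_Icc_succ_top (by omega : 1 ≤ n+1)]
      have hterm : w (n+1) * ((1 + 2 * r (n+1)) / (τ (n+1) * (1 + r (n+1))) * w (n+1)
            - r (n+1) ^ 2 / (τ (n+1) * (1 + r (n+1))) * w (n+1-1))
          = w (n+1) * ((1 + 2*u^2)/((u^2*τ n)*(1+u^2)) * w (n+1)
            - (u^2)^2/((u^2*τ n)*(1+u^2)) * w n) := by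
        rw [Nat.add_sub_cancel, ← hu2, ← hτeq]
      have hstep2 := step_ineq u (τ n) (w (n+1)) (w n) hu0 hτn
      have hA := keylem m v u hm2 hm5 hm3 hu0.le huv hvm
      have hBm := Bmono u v hu0.le huv
      have hQ : 0 ≤ w (n+1) ^ 2 / τ (n+1) := by positivity
      have hP : 0 ≤ w n ^ 2 / τ n := by positivity
      have hQeq : w (n+1) ^ 2 / τ (n+1) = w (n+1)^2/(u^2*τ n) := by rw [hτeq]
      -- assemble
      have hAQ : ((m^2 - v^2)/20 + Bv) * (w (n+1) ^ 2 / τ (n+1))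
          ≤ (2 + 4*u^2 - u^3)/(1+u^2) * (w (n+1)^2/(u^2*τ n)) := by
        rw [← hQeq]; exact mul_le_mul_of_nonneg_right hA hQ
      have hBP : u^3/(1+u^2) * (w n ^2 / τ n) ≤ Bv * (w n ^2/τ n) :=
        mul_le_mul_of_nonneg_right hBm hP
      rw [hterm]
      rw [hδeq] at ihh ⊢
      linarith [hstep2, ihh, hAQ, hBP]
  intro n h1 h2
  have hsum0 : 0 ≤ ∑ k ∈ Icc 1 n, w k ^ 2 / τ k := by
    refine sum_nonneg fun k hk => ?_
    have hk' := mem_Icc.1 hk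
    have := hτpos k hk'.1 (le_trans hk'.2 h2)
    positivity
  have hinv := inv n h1 h2
  have hBn : 0 ≤ Bv * (w n ^2 / τ n) :=
    mul_nonneg hBv0 (by have := hτpos n h1 h2; positivity)
  exact ⟨by linarith, by positivity⟩
end

section
/- Under the setting of the variable-step BDF2 kernels with 0 < r_k ≤ r_max − δ for small δ > 0, for any real sequence (w_k)_{k=1}^n and any k ≥ 2: 2 w_k ∑_{j=1}^k b^{(k)}_{k-j} w_j ≥ (r_{k+1}√r_max/(1+r_{k+1})) w_k²/τ_k − (r_k √r_max/(1+r_k)) w_{k-1}²/τ_{k-1} + (δ/20) w_k²/τ_k. -/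
open Finset

lemma bdf2_aux (s δ a b x y : ℝ) (hs2 : 2 < s) (hs5 : s^2 < 5)
    (hcube : s^3 = 1 + 2*s^2) (hδ : 0 < δ)
    (ha0 : 0 < a) (ha1 : a ≤ s^2 - δ) (hb0 : 0 < b) (hb1 : b ≤ s^2 - δ) :
    0 ≤ 2*x*((1+2*a)*x - a^2*y)*(1+b) - b*s*(1+a)*x^2 + a^2*s*(1+b)*y^2
        - (δ/20)*(1+a)*(1+b)*x^2 := by
  have hs0 : (0:ℝ) < s := by linarith
  have hA : 0 ≤ (2*s + 4*s*a - a^2)*(1+s^2) - s^4*(1+a) := by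
    have key : ((2*s + 4*s*a - a^2)*(1+s^2) - s^4*(1+a)) * s^2
        = (s^2-a)*(s+(1+s^2)*a*s^2) := by
      linear_combination (-(s^3) - a*(2*s^3+s)) * hcube
    have h1 : 0 ≤ ((2*s + 4*s*a - a^2)*(1+s^2) - s^4*(1+a)) * s^2 := by
      rw [key]
      have h2 : (0:ℝ) ≤ s^2 - a := by nlinarith
      have h3 : (0:ℝ) ≤ s + (1+s^2)*a*s^2 := by
        have := mul_nonneg (mul_nonneg (by nlinarith : (0:ℝ) ≤ 1+s^2) ha0.le) (sq_nonneg s)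
        nlinarith [this]
      exact mul_nonneg h2 h3
    nlinarith [h1, mul_pos hs0 hs0]
  have hB : 0 ≤ s^2*(s^2 - b) - (s*δ/20)*(1+b)*(1+s^2) := by
    nlinarith [mul_pos hs0 hδ, mul_pos hδ hb0, sq_nonneg (s^2-5), mul_pos hδ hδ]
  have hP : 0 ≤ (2*s+4*s*a-a^2)*(1+b) - b*s^2*(1+a) - (s*δ/20)*(1+a)*(1+b) := by
    nlinarith [mul_nonneg hA (by linarith : (0:ℝ) ≤ 1+b),
      mul_nonneg (by linarith : (0:ℝ) ≤ 1+a) hB]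
  nlinarith [mul_nonneg hP (sq_nonneg x),
    mul_nonneg (mul_nonneg (sq_nonneg a) (by linarith : (0:ℝ) ≤ 1+b)) (sq_nonneg (x - s*y)), hs0]


/-- Single-step lower bound for the variable-step BDF2 quadratic form
(Lemma 2.1, first inequality): for `k ≥ 2`,
`2 w_k ∑_{j=1}^k b^{(k)}_{k-j} w_j` is bounded below by a telescoping term
plus `(δ/20) w_k²/τ_k`. The sum `∑_{j=1}^k b^{(k)}_{k-j} w_j` is written
out explicitly since `b^{(k)}_j = 0` for `j ≥ 2`. -/
theorem bdf2_kernel_stepwise_bound (N : ℕ)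
    (τ r : ℕ → ℝ) (hτ1 : 0 < τ 1) (hr1 : r 1 = 0)
    (hstep : ∀ n, 2 ≤ n → n ≤ N → τ n = r n * τ (n - 1))
    (rmax δ : ℝ) (hroot : rmax ^ 3 = (1 + 2 * rmax) ^ 2)
    (hrmax : rmax ∈ Set.Ioo (4:ℝ) 5)
    (hδ : 0 < δ) (hδr : δ < rmax)
    (hratio : ∀ j, 2 ≤ j → j ≤ N → 0 < r j ∧ r j ≤ rmax - δ)
    (w : ℕ → ℝ) :
    ∀ k, 2 ≤ k → k + 1 ≤ N →
      2 * w k *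
          ((1 + 2 * r k) / (τ k * (1 + r k)) * w k
            - r k ^ 2 / (τ k * (1 + r k)) * w (k - 1))
        ≥ r (k + 1) * Real.sqrt rmax / (1 + r (k + 1)) * (w k ^ 2 / τ k)
          - r k * Real.sqrt rmax / (1 + r k) * (w (k - 1) ^ 2 / τ (k - 1))
          + δ / 20 * (w k ^ 2 / τ k) := by
  obtain ⟨h4, h5⟩ := hrmax
  have hrm0 : (0:ℝ) < rmax := by linarith
  -- positivity of steps
  have hτpos : ∀ n, 1 ≤ n → n ≤ N → 0 < τ n := by
    intro n hn
    induction n, hn using Nat.le_induction with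
    | base => exact fun _ => hτ1
    | succ n hn ih =>
      intro hnN
      have h2n : 2 ≤ n + 1 := by omega
      have := hstep (n+1) h2n hnN
      simp only [Nat.add_sub_cancel] at this
      rw [this]
      exact mul_pos (hratio (n+1) h2n hnN).1 (ih (by omega))
  intro k hk2 hkN
  set s := Real.sqrt rmax with hs_def
  have hs_sq : s^2 = rmax := Real.sq_sqrt hrm0.le
  have hs0 : 0 ≤ s := Real.sqrt_nonneg rmax
  have hs2 : 2 < s := by nlinarith [hs_sq]
  have hs5 : s^2 < 5 := by rw [hs_sq]; exact h5
  have hcube : s^3 = 1 + 2*s^2 := by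
    have h6 : s^6 = (1 + 2*rmax)^2 := by
      calc s^6 = (s^2)^3 := by ring
        _ = rmax^3 := by rw [hs_sq]
        _ = (1 + 2*rmax)^2 := hroot
    have hfac : (s^3 - (1 + 2*rmax)) * (s^3 + (1 + 2*rmax)) = 0 := by
      linear_combination h6
    rcases mul_eq_zero.mp hfac with h | h
    · rw [← hs_sq] at h; linarith
    · nlinarith [h]
  obtain ⟨ha0, ha1⟩ := hratio k hk2 (by omega)
  obtain ⟨hb0, hb1⟩ := hratio (k+1) (by omega) hkN
  have ht : 0 < τ (k-1) := hτpos (k-1) (by omega) (by omega)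
  have hτk : τ k = r k * τ (k-1) := hstep k hk2 (by omega)
  rw [← hs_sq] at ha1 hb1
  set a := r k
  set b := r (k+1)
  set t := τ (k-1)
  set x := w k
  set y := w (k-1)
  have h1a : (0:ℝ) < 1 + a := by linarith
  have h1b : (0:ℝ) < 1 + b := by linarith
  rw [ge_iff_le, ← sub_nonneg]
  have key : 2 * x * ((1 + 2 * a) / (τ k * (1 + a)) * x - a ^ 2 / (τ k * (1 + a)) * y)
      - (b * s / (1 + b) * (x ^ 2 / τ k) - a * s / (1 + a) * (y ^ 2 / t)
        + δ / 20 * (x ^ 2 / τ k))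
      = (2*x*((1+2*a)*x - a^2*y)*(1+b) - b*s*(1+a)*x^2 + a^2*s*(1+b)*y^2
          - (δ/20)*(1+a)*(1+b)*x^2) / (a * t * (1+a) * (1+b)) := by
    rw [hτk]
    field_simp
    ring
  rw [key]
  exact div_nonneg (bdf2_aux s δ a b x y hs2 hs5 hcube hδ ha0 ha1 hb0 hb1)
    (by positivity)
end

section
/- Let b^{(j)}_{j-k} be convolution kernels satisfying the positive-definiteness property ∑_{k=1}^n w_k ∑_{j=1}^k b^{(k)}_{k-j} w_j ≥ 0 for all real sequences (w_k) and all n, and let θ^{(n)}_{n-j} be the associated DOC kernels. Then ∑_{k=1}^n w_k ∑_{j=1}^k θ^{(k)}_{k-j} w_j ≥ 0 for all real sequences (w_k)_{k=1}^n and all n ≥ 1. -/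
open Finset

/-!
Since every diagonal entry `b k k` is nonzero, the lower-triangular system
`∑_{j ≤ k} b k j * u j = w k` can be solved for `u` by forward substitution. The DOC kernels
form a left inverse of `b`, so they send `w` back to `u`, and the quadratic form of `θ` at `w`
becomes the quadratic form of `b` at `u`, which is nonnegative.
-/

theorem exists_forall_sum_Icc_mul_eq {𝕜 : Type*} [Field 𝕜] (b : ℕ → ℕ → 𝕜) (w : ℕ → 𝕜)
    (N : ℕ) (hb : ∀ k, 1 ≤ k → k ≤ N → b k k ≠ 0) :
    ∃ u : ℕ → 𝕜, ∀ k, 1 ≤ k → k ≤ N → ∑ j ∈ Icc 1 k, b k j * u j = w k := by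
  induction N with
  | zero => exact ⟨0, fun k hk hk0 => by omega⟩
  | succ N ih =>
    obtain ⟨u, hu⟩ := ih fun k hk hkN => hb k hk (by omega)
    let c := (w (N + 1) - ∑ j ∈ Icc 1 N, b (N + 1) j * u j) / b (N + 1) (N + 1)
    have hupdate : ∀ (v : ℕ → 𝕜), ∀ k ≤ N, ∑ j ∈ Icc 1 k, v j * Function.update u (N + 1) c j
        = ∑ j ∈ Icc 1 k, v j * u j := fun v k hk =>
      sum_congr rfl fun j hj => by
        rw [Function.update_of_ne (by simp only [mem_Icc] at hj; omega)]
    refine ⟨Function.update u (N + 1) c, fun k hk hkN => ?_⟩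
    rcases hkN.lt_or_eq with hkN | rfl
    · rw [hupdate (b k) k (by omega), hu k hk (by omega)]
    · rw [sum_Icc_succ_top (by omega), hupdate (b (N + 1)) N le_rfl, Function.update_self,
        mul_div_cancel₀ _ (hb (N + 1) hk le_rfl)]
      ring

theorem sum_Icc_mul_of_left_inverse {R : Type*} [CommRing R] (b θ : ℕ → ℕ → R)
    (u w : ℕ → R) (m : ℕ) (hm : 1 ≤ m)
    (hθb : ∀ k, 1 ≤ k → k ≤ m → ∑ j ∈ Icc k m, θ m j * b j k = if m = k then 1 else 0)
    (hbu : ∀ j, 1 ≤ j → j ≤ m → ∑ i ∈ Icc 1 j, b j i * u i = w j) :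
    ∑ j ∈ Icc 1 m, θ m j * w j = u m := by
  calc ∑ j ∈ Icc 1 m, θ m j * w j
      = ∑ j ∈ Icc 1 m, ∑ i ∈ Icc 1 j, θ m j * b j i * u i := by
        refine sum_congr rfl fun j hj => ?_
        simp only [mem_Icc] at hj
        simp only [← hbu j hj.1 hj.2, mul_sum, mul_assoc]
    _ = ∑ i ∈ Icc 1 m, (∑ j ∈ Icc i m, θ m j * b j i) * u i := by
        simp only [sum_mul]
        exact sum_comm' fun j i => by simp only [mem_Icc]; omega
    _ = ∑ i ∈ Icc 1 m, (if m = i then 1 else 0) * u i := by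
        refine sum_congr rfl fun i hi => ?_
        simp only [mem_Icc] at hi
        rw [hθb i hi.1 hi.2]
    _ = u m := by simp [hm]

/-- Positive definiteness transfers from the convolution kernels `b` to the
associated DOC kernels `θ` (Corollary 2.1). Here `b n k = b^{(n)}_{n-k}`,
`θ n k = θ^{(n)}_{n-k}`. -/
theorem doc_positive_definite (N : ℕ) (b θ : ℕ → ℕ → ℝ)
    (hb0 : ∀ j, 1 ≤ j → j ≤ N → b j j ≠ 0)
    (hdoc : ∀ k n, 1 ≤ k → k ≤ n → n ≤ N →
      ∑ j ∈ Icc k n, θ n j * b j k = if n = k then 1 else 0)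
    (hbpos : ∀ n, n ≤ N → ∀ w : ℕ → ℝ,
      0 ≤ ∑ k ∈ Icc 1 n, w k * ∑ j ∈ Icc 1 k, b k j * w j) :
    ∀ n, 1 ≤ n → n ≤ N → ∀ w : ℕ → ℝ,
      0 ≤ ∑ k ∈ Icc 1 n, w k * ∑ j ∈ Icc 1 k, θ k j * w j := by
  intro n _ hnN w
  obtain ⟨u, hbu⟩ := exists_forall_sum_Icc_mul_eq b w N hb0
  calc 0 ≤ ∑ k ∈ Icc 1 n, u k * ∑ j ∈ Icc 1 k, b k j * u j := hbpos n hnN u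
    _ = ∑ k ∈ Icc 1 n, w k * ∑ j ∈ Icc 1 k, θ k j * w j := by
      refine sum_congr rfl fun k hk => ?_
      simp only [mem_Icc] at hk
      have hθw : ∑ j ∈ Icc 1 k, θ k j * w j = u k :=
        sum_Icc_mul_of_left_inverse b θ u w k hk.1
          (fun i hi hik => hdoc i k hi hik (by omega))
          (fun j hj hjk => hbu j hj (by omega))
      rw [hθw, hbu k hk.1 (by omega), mul_comm]
end

section
/- For the variable-step BDF2 kernels b^{(n)}_j (with b^{(n)}_0 = (1+2r_n)/(τ_n(1+r_n)), b^{(n)}_1 = −r_n²/(τ_n(1+r_n)), b^{(n)}_j = 0 for j ≥ 2, ratios r_k > 0, steps τ_k > 0), the DOC kernels θ^{(n)}_{n-j} satisfy: (a) θ^{(n)}_{n-j} > 0 for all 1 ≤ j ≤ n, and (b) ∑_{j=1}^n θ^{(n)}_{n-j} = τ_n for every n ≥ 1. -/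
open Finset

/-!
Orthogonality against a kernel whose columns have only two nonzero entries gives the two-term
recursion `θ n k * b k k = -θ n (k+1) * b (k+1) k`, and since the BDF2 diagonal is positive and
its subdiagonal negative, positivity propagates downward from `θ n n = 1 / b n n`.
For the row sums, the BDF2 kernels reproduce the step sizes, `∑ₖ b j k * τ k = 1`; inserting this
into `∑ⱼ θ n j` and exchanging the order of summation, orthogonality leaves `τ n`.
-/

/-- `θ n j` is the discrete orthogonal convolution (DOC) kernel of `b` up to level `N`, with both
kernels indexed by absolute time levels: `b j k = b^{(j)}_{j-k}`, `θ n j = θ^{(n)}_{n-j}`. -/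
def IsDOC {R : Type*} [CommRing R] (N : ℕ) (b θ : ℕ → ℕ → R) : Prop :=
  ∀ k n, 1 ≤ k → k ≤ n → n ≤ N → ∑ j ∈ Icc k n, θ n j * b j k = if n = k then 1 else 0

namespace IsDOC

variable {R : Type*} [CommRing R] {N : ℕ} {b θ : ℕ → ℕ → R}

theorem mul_diag_eq_one (hdoc : IsDOC N b θ) {n : ℕ} (hn : 1 ≤ n) (hnN : n ≤ N) :
    θ n n * b n n = 1 := by
  simpa using hdoc n n hn le_rfl hnN

theorem sum_eq_of_sum_mul_eq_one (hdoc : IsDOC N b θ) {v : ℕ → R}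
    (hv : ∀ j, 1 ≤ j → j ≤ N → ∑ k ∈ Icc 1 j, b j k * v k = 1)
    {n : ℕ} (hn : 1 ≤ n) (hnN : n ≤ N) :
    ∑ j ∈ Icc 1 n, θ n j = v n := by
  calc ∑ j ∈ Icc 1 n, θ n j
      = ∑ j ∈ Icc 1 n, ∑ k ∈ Icc 1 j, θ n j * b j k * v k := by
        refine sum_congr rfl fun j hj => ?_
        obtain ⟨hj1, hjn⟩ := mem_Icc.mp hj
        simp_rw [mul_assoc, ← mul_sum, hv j hj1 (hjn.trans hnN), mul_one]
    _ = ∑ k ∈ Icc 1 n, (∑ j ∈ Icc k n, θ n j * b j k) * v k := by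
        simp_rw [sum_mul]
        exact sum_comm' (fun j k => by simp only [mem_Icc]; omega)
    _ = ∑ k ∈ Icc 1 n, (if n = k then v k else 0) := by
        refine sum_congr rfl fun k hk => ?_
        obtain ⟨hk1, hkn⟩ := mem_Icc.mp hk
        rw [hdoc k n hk1 hkn hnN, ite_mul, one_mul, zero_mul]
    _ = v n := by simp [hn]

variable (hband : ∀ j k, j ≤ N → 1 ≤ k → k + 2 ≤ j → b j k = 0)
include hband

theorem mul_add_mul_eq_zero (hdoc : IsDOC N b θ) {k n : ℕ} (hk : 1 ≤ k) (hkn : k < n)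
    (hnN : n ≤ N) : θ n k * b k k + θ n (k + 1) * b (k + 1) k = 0 := by
  have hsplit : Icc k n = insert k (insert (k + 1) (Icc (k + 2) n)) := by
    ext x; simp only [mem_Icc, mem_insert]; omega
  have htail : ∑ j ∈ Icc (k + 2) n, θ n j * b j k = 0 :=
    sum_eq_zero fun j hj => by
      rw [hband j k ((mem_Icc.mp hj).2.trans hnN) hk (mem_Icc.mp hj).1, mul_zero]
  have h := hdoc k n hk hkn.le hnN
  rwa [if_neg hkn.ne', hsplit, sum_insert (by simp), sum_insert (by simp), htail,
    add_zero] at h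

end IsDOC

theorem IsDOC.pos {R : Type*} [CommRing R] [LinearOrder R] [IsStrictOrderedRing R] {N : ℕ}
    {b θ : ℕ → ℕ → R} (hdoc : IsDOC N b θ)
    (hband : ∀ j k, j ≤ N → 1 ≤ k → k + 2 ≤ j → b j k = 0)
    (hdiag : ∀ k, 1 ≤ k → k ≤ N → 0 < b k k)
    (hsub : ∀ k, 1 ≤ k → k + 1 ≤ N → b (k + 1) k < 0)
    {j n : ℕ} (hj : 1 ≤ j) (hjn : j ≤ n) (hnN : n ≤ N) : 0 < θ n j := by
  induction h : n - j generalizing j with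
  | zero =>
    obtain rfl : j = n := by omega
    exact pos_of_mul_pos_left (hdoc.mul_diag_eq_one hj hnN ▸ one_pos) (hdiag j hj hnN).le
  | succ d ih =>
    have hnext : 0 < θ n (j + 1) := ih (by omega) (by omega) (by omega)
    have hrec := hdoc.mul_add_mul_eq_zero hband hj (by omega) hnN
    have hprod : 0 < θ n j * b j j := by
      nlinarith [mul_pos hnext (neg_pos.mpr (hsub j hj (by omega)))]
    exact pos_of_mul_pos_left hprod (hdiag j hj (by omega)).le

theorem sum_Icc_succ_mul_of_band {R : Type*} [CommRing R] {N : ℕ} {b : ℕ → ℕ → R}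
    (hband : ∀ j k, j ≤ N → 1 ≤ k → k + 2 ≤ j → b j k = 0) (v : ℕ → R)
    {j : ℕ} (hj : 1 ≤ j) (hjN : j + 1 ≤ N) :
    ∑ k ∈ Icc 1 (j + 1), b (j + 1) k * v k = b (j + 1) (j + 1) * v (j + 1) + b (j + 1) j * v j := by
  have hsplit : Icc 1 (j + 1) = insert (j + 1) (insert j (Icc 1 (j - 1))) := by
    ext x; simp only [mem_Icc, mem_insert]; omega
  have hrest : ∑ k ∈ Icc 1 (j - 1), b (j + 1) k * v k = 0 :=
    sum_eq_zero fun k hk => by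
      rw [hband (j + 1) k hjN (mem_Icc.mp hk).1 (by have := (mem_Icc.mp hk).2; omega), zero_mul]
  rw [hsplit, sum_insert (by simp), sum_insert (by simp; omega), hrest, add_zero]

theorem bdf2_diag_pos {τ r : ℝ} (hτ : 0 < τ) (hr : 0 ≤ r) :
    0 < (1 + 2 * r) / (τ * (1 + r)) := by
  positivity

theorem bdf2_subdiag_neg {τ r : ℝ} (hτ : 0 < τ) (hr : 0 < r) :
    -(r ^ 2) / (τ * (1 + r)) < 0 :=
  div_neg_of_neg_of_pos (by simp; positivity) (by positivity)

theorem bdf2_sum_mul_step_eq_one {τ r : ℝ} (hτ : 0 < τ) (hr : 0 < r) :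
    (1 + 2 * r) / (r * τ * (1 + r)) * (r * τ) + -(r ^ 2) / (r * τ * (1 + r)) * τ = 1 := by
  field_simp
  ring

/-- For the variable-step BDF2 kernels, the DOC kernels are positive and
each row sums to the current step size `τ n` (Lemma 2.2). Here
`b n j = b^{(n)}_{n-j}` and `θ n j = θ^{(n)}_{n-j}`. -/
theorem bdf2_doc_positive_row_sum (N : ℕ)
    (τ r : ℕ → ℝ) (hτ : ∀ k, 1 ≤ k → k ≤ N → 0 < τ k) (hr1 : r 1 = 0)
    (hr : ∀ k, 2 ≤ k → k ≤ N → 0 < r k ∧ τ k = r k * τ (k - 1))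
    (b θ : ℕ → ℕ → ℝ)
    (hb0 : ∀ n, 1 ≤ n → n ≤ N → b n n = (1 + 2 * r n) / (τ n * (1 + r n)))
    (hb1 : ∀ n, 2 ≤ n → n ≤ N → b n (n - 1) = -(r n ^ 2) / (τ n * (1 + r n)))
    (hb2 : ∀ n j, n ≤ N → 1 ≤ j → j + 2 ≤ n → b n j = 0)
    (hdoc : ∀ k n, 1 ≤ k → k ≤ n → n ≤ N →
      ∑ j ∈ Icc k n, θ n j * b j k = if n = k then 1 else 0) :
    (∀ j n, 1 ≤ j → j ≤ n → n ≤ N → 0 < θ n j) ∧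
    (∀ n, 1 ≤ n → n ≤ N → ∑ j ∈ Icc 1 n, θ n j = τ n) := by
  have hdoc : IsDOC N b θ := hdoc
  have hr_nonneg : ∀ k, 1 ≤ k → k ≤ N → 0 ≤ r k := fun k hk hkN => by
    rcases hk.eq_or_lt with rfl | hk
    · exact hr1.ge
    · exact (hr k hk hkN).1.le
  have hdiag : ∀ k, 1 ≤ k → k ≤ N → 0 < b k k := fun k hk hkN => by
    rw [hb0 k hk hkN]; exact bdf2_diag_pos (hτ k hk hkN) (hr_nonneg k hk hkN)
  have hb1_succ : ∀ k, 1 ≤ k → k + 1 ≤ N →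
      b (k + 1) k = -(r (k + 1) ^ 2) / (τ (k + 1) * (1 + r (k + 1))) := fun k hk hkN => by
    simpa using hb1 (k + 1) (by omega) hkN
  have hsub : ∀ k, 1 ≤ k → k + 1 ≤ N → b (k + 1) k < 0 := fun k hk hkN => by
    rw [hb1_succ k hk hkN]
    exact bdf2_subdiag_neg (hτ (k + 1) (by omega) hkN) (hr (k + 1) (by omega) hkN).1
  have hconsistent : ∀ j, 1 ≤ j → j ≤ N → ∑ k ∈ Icc 1 j, b j k * τ k = 1 := by
    rintro (_ | _ | j) hj hjN
    · omega
    · simp [hb0 1 le_rfl hjN, hr1, (hτ 1 le_rfl hjN).ne']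
    · obtain ⟨hr_pos, hτ_eq⟩ := hr (j + 1 + 1) (by omega) hjN
      rw [Nat.add_sub_cancel] at hτ_eq
      rw [sum_Icc_succ_mul_of_band hb2 τ (by omega) hjN, hb0 _ (by omega) hjN,
        hb1_succ (j + 1) (by omega) hjN, hτ_eq]
      exact bdf2_sum_mul_step_eq_one (hτ (j + 1) (by omega) (by omega)) hr_pos
  exact ⟨fun j n hj hjn hnN => hdoc.pos hb2 hdiag hsub hj hjn hnN,
    fun n hn hnN => hdoc.sum_eq_of_sum_mul_eq_one hconsistent hn hnN⟩
end

section
/- For the variable-step BDF2 scheme with time-step ratios satisfying 0 < r_k ≤ r_max − δ (so that the DCC kernels are well-defined and the DOC kernels are positive with row sums τ_l), each DCC kernel is bounded by twice the maximal step size: p^{(n)}_{n-j} ≤ 2τ for all 1 ≤ j ≤ n, where τ = max_{1≤k≤N} τ_k. -/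
open Finset

set_option maxHeartbeats 1000000 in
/-- Each DCC kernel of the variable-step BDF2 scheme is bounded by twice the
maximal time-step size (Proposition 2.2, second part). -/
theorem bdf2_dcc_bounded_by_max_step (N : ℕ) (hN : 1 ≤ N)
    (τ r : ℕ → ℝ) (hτ : ∀ k, 1 ≤ k → k ≤ N → 0 < τ k) (hr1 : r 1 = 0)
    (hstep : ∀ k, 2 ≤ k → k ≤ N → τ k = r k * τ (k - 1))
    (rmax δ : ℝ) (hroot : rmax ^ 3 = (1 + 2 * rmax) ^ 2)
    (hrmax : rmax ∈ Set.Ioo (4:ℝ) 5)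
    (hδ : 0 < δ) (hδr : δ < rmax)
    (hratio : ∀ k, 2 ≤ k → k ≤ N → 0 < r k ∧ r k ≤ rmax - δ)
    (b p : ℕ → ℕ → ℝ)
    (hb0 : ∀ n, 1 ≤ n → n ≤ N → b n n = (1 + 2 * r n) / (τ n * (1 + r n)))
    (hb1 : ∀ n, 2 ≤ n → n ≤ N → b n (n - 1) = -(r n ^ 2) / (τ n * (1 + r n)))
    (hb2 : ∀ n j, n ≤ N → 1 ≤ j → j + 2 ≤ n → b n j = 0)
    (hdcc : ∀ k n, 1 ≤ k → k ≤ n → n ≤ N →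
      ∑ j ∈ Icc k n, p n j * b j k = 1) :
    ∀ j n, 1 ≤ j → j ≤ n → n ≤ N →
      p n j ≤ 2 * (Icc 1 N).sup' (Finset.nonempty_Icc.mpr hN) τ := by
  intro j n hj hjn hnN
  set T := (Icc 1 N).sup' (Finset.nonempty_Icc.mpr hN) τ with hTdef
  have hT : ∀ k, 1 ≤ k → k ≤ N → τ k ≤ T := fun k h1 h2 =>
    le_sup' τ (mem_Icc.mpr ⟨h1, h2⟩)
  have hTpos : 0 < T := lt_of_lt_of_le (hτ 1 le_rfl hN) (hT 1 le_rfl hN)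
  have hrnn : ∀ k, 1 ≤ k → k ≤ N → 0 ≤ r k := by
    intro k h1 h2
    rcases eq_or_lt_of_le h1 with h | h
    · rw [← h, hr1]
    · exact (hratio k h h2).1.le
  -- main claim, by downward induction
  have key : ∀ m k, 1 ≤ k → k + m = n →
      p n k ≤ 2 * T * ((1 + r k) / (1 + 2 * r k)) := by
    intro m
    induction m with
    | zero =>
      intro k hk1 hkn
      have hkn' : k = n := by omega
      subst hkn'
      have hsum := hdcc k k hk1 le_rfl hnN
      rw [Finset.Icc_self, Finset.sum_singleton] at hsum
      have hrk := hrnn k hk1 hnN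
      have hτk := hτ k hk1 hnN
      have h1r : (0:ℝ) < 1 + r k := by linarith
      have h2r : (0:ℝ) < 1 + 2 * r k := by linarith
      rw [hb0 k hk1 hnN] at hsum
      have heq : p k k * (1 + 2 * r k) = τ k * (1 + r k) := by
        field_simp at hsum
        linarith [hsum]
      rw [← mul_div_assoc, le_div_iff₀ h2r]
      nlinarith [hT k hk1 hnN, mul_pos hTpos h1r]
    | succ m ih =>
      intro k hk1 hkn
      have hkN : k ≤ N := by omega
      have hk1N : k + 1 ≤ N := by omega
      have hk1n : k + 1 ≤ n := by omega
      have ihk := ih (k + 1) (by omega) (by omega)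
      have hsum := hdcc k n hk1 (by omega) hnN
      have hset : Icc k n = insert k (insert (k + 1) (Icc (k + 2) n)) := by
        ext x; simp [mem_Icc, mem_insert]; omega
      rw [hset, Finset.sum_insert (by simp only [mem_insert, mem_Icc]; omega),
        Finset.sum_insert (by simp only [mem_Icc]; omega),
        Finset.sum_eq_zero (fun x hx => by
          rw [mem_Icc] at hx
          rw [hb2 x k (hx.2.trans hnN) hk1 hx.1, mul_zero])] at hsum
      rw [add_zero] at hsum
      -- now hsum : p n k * b k k + p n (k+1) * b (k+1) k = 1
      have hrk := hrnn k hk1 hkN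
      have hτk := hτ k hk1 hkN
      have hτk1 := hτ (k + 1) (by omega) hk1N
      have hrk1 := (hratio (k + 1) (by omega) hk1N).1
      have hτstep : τ (k + 1) = r (k + 1) * τ k := by
        have := hstep (k + 1) (by omega) hk1N
        simpa using this
      have h1s : (0:ℝ) < 1 + r k := by linarith
      have h2s : (0:ℝ) < 1 + 2 * r k := by linarith
      have h1t : (0:ℝ) < 1 + r (k + 1) := by linarith
      have h2t : (0:ℝ) < 1 + 2 * r (k + 1) := by linarith
      have hbb := hb1 (k + 1) (by omega) hk1N
      simp only [Nat.add_sub_cancel] at hbb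
      rw [hb0 k hk1 hkN, hbb] at hsum
      -- turn ih into a polynomial inequality
      have hq : p n (k + 1) * (1 + 2 * r (k + 1)) ≤ 2 * T * (1 + r (k + 1)) := by
        rw [← mul_div_assoc, le_div_iff₀ h2t] at ihk
        linarith
      rw [hτstep] at hsum
      set s := r k
      set t := r (k + 1)
      set a := τ k
      set P := p n k
      set q := p n (k + 1)
      have heq : P * (1 + 2 * s) * t * (1 + t) - q * t ^ 2 * (1 + s)
          = t * a * (1 + t) * (1 + s) := by
        field_simp at hsum
        nlinarith [hsum]
      rw [← mul_div_assoc, le_div_iff₀ h2s]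
      -- want : P * (1 + 2*s) ≤ 2*T*(1+s)
      have hkey : a * (1 + 2 * t) ≤ 2 * T * (1 + t) := by
        nlinarith [hT k hk1 hkN, hTpos]
      have m1 := mul_le_mul_of_nonneg_right hq (by positivity : (0:ℝ) ≤ t ^ 2 * (1 + s))
      have m2 := mul_le_mul_of_nonneg_right hkey
        (by positivity : (0:ℝ) ≤ t * (1 + t) * (1 + s))
      have heq2 : P * (1 + 2 * s) * (t * (1 + t) * (1 + 2 * t))
          = q * (1 + 2 * t) * (t ^ 2 * (1 + s))
            + a * (1 + 2 * t) * (t * (1 + t) * (1 + s)) := by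
        linear_combination (1 + 2 * t) * heq
      have hfin : P * (1 + 2 * s) * (t * (1 + t) * (1 + 2 * t))
          ≤ 2 * T * (1 + s) * (t * (1 + t) * (1 + 2 * t)) := by
        rw [heq2]
        nlinarith [m1, m2]
      exact le_of_mul_le_mul_right hfin (by positivity)
  have hrj := hrnn j hj (hjn.trans hnN)
  have hja := key (n - j) j hj (by omega)
  have h2r : (0:ℝ) < 1 + 2 * r j := by linarith
  have hfrac : (1 + r j) / (1 + 2 * r j) ≤ 1 := by
    rw [div_le_one h2r]; linarith
  calc p n j ≤ 2 * T * ((1 + r j) / (1 + 2 * r j)) := hja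
    _ ≤ 2 * T * 1 := by
        apply mul_le_mul_of_nonneg_left hfrac (by linarith)
    _ = 2 * T := by ring
end

section
/- For the variable-step BDF2 kernels with r₁ = 0, the DOC kernels admit the explicit product formula θ^{(n)}_{n-j} = (1/b^{(j)}_0) ∏_{i=j+1}^n (r_i²/(1+2r_i)) for 1 ≤ j ≤ n, where b^{(j)}_0 = (1+2r_j)/(τ_j(1+r_j)). -/
open Finset

/-!
Only the kernels `b^{(k)}_0` and `b^{(k+1)}_1` are nonzero, so the orthogonality identity at
`k < n` has just two terms and gives `θ^{(n)}_{n-k} = -θ^{(n)}_{n-k-1} b^{(k+1)}_1 / b^{(k)}_0`.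
Downward induction from `θ^{(n)}_0 = 1 / b^{(n)}_0` turns this recursion into a product of the
ratios `-b^{(i)}_1 / b^{(i)}_0`, which for BDF2 equal `r_i² / (1 + 2 r_i)`.
-/

section BandedKernels

variable {K : Type*} [Field K] {n : ℕ} {b : ℕ → ℕ → K} {θ : ℕ → K}

theorem sum_Icc_mul_eq_add_of_banded {k : ℕ} (hkn : k < n)
    (hb : ∀ j, k + 2 ≤ j → j ≤ n → b j k = 0) :
    ∑ j ∈ Icc k n, θ j * b j k = θ k * b k k + θ (k + 1) * b (k + 1) k := by
  have htail : ∑ j ∈ Icc (k + 1 + 1) n, θ j * b j k = 0 :=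
    sum_eq_zero fun j hj => by
      rw [mem_Icc] at hj
      rw [hb j hj.1 hj.2, mul_zero]
  rw [← insert_Icc_add_one_left_eq_Icc hkn.le, sum_insert (by simp),
    ← insert_Icc_add_one_left_eq_Icc hkn, sum_insert (by simp), htail, add_zero]

/-- `b` is indexed as `b j k = b^{(j)}_{j-k}` and `θ j = θ^{(n)}_{n-j}`. -/
theorem doc_kernel_eq_prod
    (hb : ∀ j k, 1 ≤ k → k + 2 ≤ j → j ≤ n → b j k = 0)
    (hdiag : ∀ j, 1 ≤ j → j ≤ n → b j j ≠ 0)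
    (hdoc : ∀ k, 1 ≤ k → k ≤ n → ∑ j ∈ Icc k n, θ j * b j k = if n = k then 1 else 0)
    {j : ℕ} (hj : 1 ≤ j) (hjn : j ≤ n) :
    θ j = 1 / b j j * ∏ i ∈ Icc (j + 1) n, -b i (i - 1) / b i i := by
  induction hjn using Nat.decreasingInduction with
  | self =>
    have h := hdoc n hj le_rfl
    rw [Icc_self, sum_singleton, if_pos rfl] at h
    rw [Icc_eq_empty (by omega), prod_empty, mul_one, eq_div_iff (hdiag n hj le_rfl), h]
  | of_succ k hkn ih =>
    have hk1 : b (k + 1) (k + 1) ≠ 0 := hdiag (k + 1) (by omega) hkn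
    have hrec : θ k * b k k + θ (k + 1) * b (k + 1) k = 0 := by
      rw [← sum_Icc_mul_eq_add_of_banded hkn (hb · k hj), hdoc k hj hkn.le, if_neg hkn.ne']
    have hθk : θ k = -θ (k + 1) * b (k + 1) k / b k k := by
      rw [eq_div_iff (hdiag k hj hkn.le)]
      linear_combination hrec
    rw [hθk, ih (by omega), ← insert_Icc_add_one_left_eq_Icc (a := k + 1) hkn,
      prod_insert (by simp), Nat.add_sub_cancel]
    field_simp

end BandedKernels

theorem bdf2_kernel_ratio {K : Type*} [Field K] {τ r : K} (hτ : τ ≠ 0) (hr : 1 + r ≠ 0) :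
    -(-(r ^ 2) / (τ * (1 + r))) / ((1 + 2 * r) / (τ * (1 + r))) = r ^ 2 / (1 + 2 * r) := by
  rw [neg_div _ (r ^ 2), neg_neg, div_div_div_cancel_right₀ (mul_ne_zero hτ hr)]

/-- Explicit product formula for the DOC kernels of the variable-step BDF2
method: `θ^{(n)}_{n-j} = (1/b^{(j)}_0) ∏_{i=j+1}^n r_i²/(1+2r_i)`. -/
theorem bdf2_doc_product_formula (N : ℕ)
    (τ r : ℕ → ℝ) (hτ : ∀ k, 1 ≤ k → k ≤ N → 0 < τ k) (hr1 : r 1 = 0)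
    (hr : ∀ k, 2 ≤ k → k ≤ N → 0 < r k ∧ τ k = r k * τ (k - 1))
    (b θ : ℕ → ℕ → ℝ)
    (hb0 : ∀ n, 1 ≤ n → n ≤ N → b n n = (1 + 2 * r n) / (τ n * (1 + r n)))
    (hb1 : ∀ n, 2 ≤ n → n ≤ N → b n (n - 1) = -(r n ^ 2) / (τ n * (1 + r n)))
    (hb2 : ∀ n j, n ≤ N → 1 ≤ j → j + 2 ≤ n → b n j = 0)
    (hdoc : ∀ k n, 1 ≤ k → k ≤ n → n ≤ N →
      ∑ j ∈ Icc k n, θ n j * b j k = if n = k then 1 else 0) :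
    ∀ j n, 1 ≤ j → j ≤ n → n ≤ N →
      θ n j = (1 / b j j) * ∏ i ∈ Icc (j + 1) n, r i ^ 2 / (1 + 2 * r i) := by
  intro j n hj hjn hnN
  have hr_nonneg : ∀ k, 1 ≤ k → k ≤ N → 0 ≤ r k := fun k hk hkN =>
    (eq_or_lt_of_le hk).elim (fun h => h ▸ hr1.ge) fun h => (hr k h hkN).1.le
  have hdiag : ∀ k, 1 ≤ k → k ≤ N → b k k ≠ 0 := fun k hk hkN => by
    have := hτ k hk hkN
    have := hr_nonneg k hk hkN
    rw [hb0 k hk hkN]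
    positivity
  rw [doc_kernel_eq_prod (fun i k hk hki hin => hb2 i k (hin.trans hnN) hk hki)
    (fun k hk hkn => hdiag k hk (hkn.trans hnN)) (fun k hk hkn => hdoc k n hk hkn hnN) hj hjn]
  congr 1
  refine prod_congr rfl fun i hi => ?_
  rw [mem_Icc] at hi
  have hiN : i ≤ N := hi.2.trans hnN
  have := hr_nonneg i (by omega) hiN
  rw [hb0 i (by omega) hiN, hb1 i (by omega) hiN,
    bdf2_kernel_ratio (hτ i (by omega) hiN).ne' (by positivity)]
end
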